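/- Let M be a nonnegative integer, let A = (A_{m,j}) be an (L−1)×N matrix of nonnegative integers with d(A) := Σ_{m=1}^{L−1} Σ_{j=1}^{N} A_{m,j} = M, and let q^A = Π_{m=1}^{L−1} Π_{j=1}^{N} (q_m^{(j)})^{A_{m,j}}. Then for each 1 ≤ i ≤ N the polynomial z_i(z_i−1) H_i q^A + Σ_{n=1}^{L−1} (κ_0 − Σ_{j=1}^{N} θ_j − M)(κ_n + Σ_{j=1}^{N} A_{n,j}) q_n^{(i)} q^A has total degree at most M. -/
import Mathlib


namespace Stmt7Aux
open MvPolynomial Finsupp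

variable {σ : Type*} [Fintype σ] [DecidableEq σ]

noncomputable def mon (s : σ →₀ ℕ) : MvPolynomial σ ℂ := monomial s 1

def degf (s : σ →₀ ℕ) : ℕ := ∑ v, s v

def Good (d : ℤ) (p : MvPolynomial σ ℂ) : Prop :=
  ∃ (c : ℂ) (s : σ →₀ ℕ), p = c • mon s ∧ (c = 0 ∨ (degf s : ℤ) ≤ d)

lemma smul_mon (c : ℂ) (s : σ →₀ ℕ) : c • mon s = monomial s c := by
  simp [mon, smul_monomial]

lemma sum_single_one (v : σ) : degf (Finsupp.single v 1) = 1 := by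
  simp [degf, Finsupp.single_apply]

lemma degf_add_single (s : σ →₀ ℕ) (v : σ) : degf (s + Finsupp.single v 1) = degf s + 1 := by
  have : degf (s + Finsupp.single v 1) = degf s + degf (Finsupp.single v 1) := by
    simp [degf, Finsupp.add_apply, Finset.sum_add_distrib]
  rw [this, sum_single_one]

lemma degf_sub_single (s : σ →₀ ℕ) (v : σ) (h : s v ≠ 0) :
    degf (s - Finsupp.single v 1) + 1 = degf s := by
  unfold degf
  rw [← Finset.sum_erase_add _ _ (Finset.mem_univ v),
    ← Finset.sum_erase_add _ (fun w => s w) (Finset.mem_univ v)]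
  have h1 : ∀ w ∈ Finset.univ.erase v, (s - Finsupp.single v 1 : σ →₀ ℕ) w = s w := by
    intro w hw
    rw [Finsupp.tsub_apply, Finsupp.single_apply,
      if_neg (by exact fun hvw => (Finset.mem_erase.mp hw).1 hvw.symm)]
    omega
  rw [Finset.sum_congr rfl h1]
  have h2 : (s - Finsupp.single v 1 : σ →₀ ℕ) v = s v - 1 := by
    rw [Finsupp.tsub_apply, Finsupp.single_apply, if_pos rfl]
  rw [h2, show (Finset.univ.erase v).sum ⇑s = ∑ x ∈ Finset.univ.erase v, s x from rfl]
  omega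

lemma mon_totalDegree_smul (c : ℂ) (s : σ →₀ ℕ) : (c • mon s).totalDegree ≤ degf s := by
  rw [smul_mon]
  by_cases hc : c = 0
  · simp [hc]
  · rw [totalDegree_monomial _ hc]
    rw [Finsupp.sum_fintype _ _ (fun _ => rfl)]
    exact le_of_eq rfl

lemma good_mono {d d' : ℤ} (h : d ≤ d') {p : MvPolynomial σ ℂ} : Good d p → Good d' p := by
  rintro ⟨c, s, rfl, hc⟩
  exact ⟨c, s, rfl, hc.imp id (fun h' => h'.trans h)⟩

lemma good_totalDegree {M : ℕ} {p : MvPolynomial σ ℂ} (hg : Good (M : ℤ) p) :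
    p.totalDegree ≤ M := by
  obtain ⟨c, s, rfl, hc⟩ := hg
  rcases hc with hc | hc
  · simp [hc]
  · exact (mon_totalDegree_smul c s).trans (by exact_mod_cast hc)

lemma good_smul {d : ℤ} {p : MvPolynomial σ ℂ} (a : ℂ) (hp : Good d p) : Good d (a • p) := by
  obtain ⟨c, s, rfl, hc⟩ := hp
  exact ⟨a * c, s, by rw [smul_smul], hc.imp (fun h => by rw [h, mul_zero]) id⟩

lemma good_neg {d : ℤ} {p : MvPolynomial σ ℂ} (hp : Good d p) : Good d (-p) := by
  rw [show -p = (-1 : ℂ) • p by simp]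
  exact good_smul _ hp

lemma X_mul_mon (v : σ) (s : σ →₀ ℕ) : X v * mon s = mon (s + Finsupp.single v 1) := by
  rw [mon, mon, X, monomial_mul, one_mul, add_comm]

lemma good_X_mul {d : ℤ} {p : MvPolynomial σ ℂ} (v : σ) (hp : Good d p) :
    Good (d + 1) (X v * p) := by
  obtain ⟨c, s, rfl, hc⟩ := hp
  refine ⟨c, s + Finsupp.single v 1, by rw [mul_smul_comm, X_mul_mon], ?_⟩
  refine hc.imp id (fun h => ?_)
  rw [degf_add_single]; push_cast; omega

lemma pderiv_mon (v : σ) (s : σ →₀ ℕ) :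
    pderiv v (mon s) = ((s v : ℂ)) • mon (s - Finsupp.single v 1) := by
  rw [mon, pderiv_monomial, one_mul, smul_mon]

lemma good_pderiv {d : ℤ} {p : MvPolynomial σ ℂ} (v : σ) (hp : Good d p) :
    Good (d - 1) (pderiv v p) := by
  obtain ⟨c, s, rfl, hc⟩ := hp
  rw [Derivation.map_smul, pderiv_mon, smul_smul]
  refine ⟨c * (s v : ℂ), s - Finsupp.single v 1, rfl, ?_⟩
  by_cases hv : s v = 0
  · exact Or.inl (by rw [hv]; simp)
  · refine hc.imp (fun h => by rw [h, zero_mul]) (fun h => ?_)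
    have := degf_sub_single s v hv
    push_cast; omega

lemma numop (v : σ) (c : ℂ) (s : σ →₀ ℕ) :
    X v * (pderiv v (c • mon s)) = (c * (s v : ℂ)) • mon s := by
  rw [Derivation.map_smul, pderiv_mon, smul_smul, mul_smul_comm, X_mul_mon]
  by_cases hv : s v = 0
  · rw [hv]; simp
  · rw [tsub_add_cancel_of_le (Finsupp.single_le_iff.mpr (by omega))]

lemma icc_sum_fin {β : Type*} [AddCommMonoid β] (n : ℕ) (f : ℕ → β) :
    ∑ m ∈ Finset.Icc 1 n, f m = ∑ a : Fin n, f ((a : ℕ) + 1) := by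
  rw [Fin.sum_univ_eq_sum_range (fun k => f (k + 1)) n, ← Finset.Ico_add_one_right_eq_Icc,
    Finset.sum_Ico_eq_sum_range]
  exact Finset.sum_congr (by norm_num) (fun k _ => by rw [Nat.add_comm])

end Stmt7Aux

open MvPolynomial Stmt7Aux in
theorem stmt7 (L N : ℕ) (hL : 2 ≤ L) (hN : 1 ≤ N)
    (e κ θ : ℕ → ℂ)
    (he_sum : ∑ m ∈ Finset.range L, e m = ((L : ℂ) - 1) / 2)
    (hκ_sum : ∑ m ∈ Finset.range L, κ m = ∑ i ∈ Finset.range (N + 1), θ i)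
    (z : ℕ → ℂ)
    (hz_distinct : ∀ i j, 1 ≤ i → i ≤ N → 1 ≤ j → j ≤ N → i ≠ j → z i ≠ z j)
    (hz0 : ∀ i, 1 ≤ i → i ≤ N → z i ≠ 0)
    (hz1 : ∀ i, 1 ≤ i → i ≤ N → z i ≠ 1)
    (Q P : ℕ → ℕ → Module.End ℂ (MvPolynomial (Fin (L - 1) × Fin N) ℂ))
    (hQ : ∀ m i, ∀ hm : 1 ≤ m ∧ m ≤ L - 1, ∀ hi : 1 ≤ i ∧ i ≤ N,
      Q m i = LinearMap.mulLeft ℂ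
        (MvPolynomial.X (⟨m - 1, by omega⟩, ⟨i - 1, by omega⟩)))
    (hP : ∀ m i, ∀ hm : 1 ≤ m ∧ m ≤ L - 1, ∀ hi : 1 ≤ i ∧ i ≤ N,
      P m i = (MvPolynomial.pderiv (⟨m - 1, by omega⟩, ⟨i - 1, by omega⟩)).toLinearMap)
    (hQ0 : ∀ i, 1 ≤ i → i ≤ N →
      Q 0 i = θ i • (1 : Module.End ℂ (MvPolynomial (Fin (L - 1) × Fin N) ℂ))
        + ∑ m ∈ Finset.Icc 1 (L - 1), Q m i * P m i)
    (hP0 : ∀ i, 1 ≤ i → i ≤ N → P 0 i = -1)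
    (hQm0 : ∀ m, 1 ≤ m → m ≤ L - 1 → Q m 0 = -1)
    (hPm0 : ∀ m, 1 ≤ m → m ≤ L - 1 →
      P m 0 = κ m • (1 : Module.End ℂ (MvPolynomial (Fin (L - 1) × Fin N) ℂ))
        + ∑ i ∈ Finset.Icc 1 N, Q m i * P m i)
    (hQ00 : Q 0 0 = (κ 0 - ∑ i ∈ Finset.Icc 1 N, θ i) •
        (1 : Module.End ℂ (MvPolynomial (Fin (L - 1) × Fin N) ℂ))
      - ∑ i ∈ Finset.Icc 1 N, ∑ m ∈ Finset.Icc 1 (L - 1), Q m i * P m i)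
    (hP00 : P 0 0 = -1)
    (H : ℕ → Module.End ℂ (MvPolynomial (Fin (L - 1) × Fin N) ℂ))
    (hH : ∀ i, 1 ≤ i → i ≤ N → z i • H i =
      (∑ n ∈ Finset.range L, e n • (Q n i * P n i))
      + (∑ j ∈ Finset.range (N + 1), ∑ n ∈ Finset.range L, ∑ m ∈ Finset.range n,
          Q m i * P m j * Q n j * P n i)
      + (z i - 1)⁻¹ • (∑ m ∈ Finset.range L, ∑ n ∈ Finset.range L,
          Q m i * P m 0 * Q n 0 * P n i)
      + (∑ j ∈ (Finset.Icc 1 N).erase i, (z j / (z i - z j)) •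
          (∑ m ∈ Finset.range L, ∑ n ∈ Finset.range L, Q m i * P n i * Q n j * P m j))
      + (θ i * (e 0 + κ 0 - (∑ j ∈ Finset.Icc 1 N, θ j)
          - ∑ j ∈ (Finset.Icc 1 N).erase i, θ j * z j / (z i - z j))) •
          (1 : Module.End ℂ (MvPolynomial (Fin (L - 1) × Fin N) ℂ)))
    (M : ℕ) (A : Fin (L - 1) × Fin N → ℕ)
    (hA : ∑ v : Fin (L - 1) × Fin N, A v = M) :
    ∀ i, ∀ hi : 1 ≤ i ∧ i ≤ N,
      ((z i * (z i - 1)) •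
          (H i (∏ v : Fin (L - 1) × Fin N, MvPolynomial.X v ^ A v))
        + ∑ a : Fin (L - 1),
            (((κ 0 - ∑ j ∈ Finset.Icc 1 N, θ j) - (M : ℂ)) *
              (κ ((a : ℕ) + 1) + ∑ b : Fin N, (A (a, b) : ℂ))) •
            (MvPolynomial.X (a, (⟨i - 1, by omega⟩ : Fin N)) *
              ∏ v : Fin (L - 1) × Fin N, MvPolynomial.X v ^ A v)).totalDegree ≤ M := by
  intro i hi
  obtain ⟨hi1, hi2⟩ := hi
  classical
  set s₀ : (Fin (L - 1) × Fin N) →₀ ℕ := Finsupp.equivFunOnFinite.symm A with hs₀def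
  have hs₀app : ∀ v, s₀ v = A v := fun v => rfl
  have hdegf : degf s₀ = M := by
    unfold degf; rw [← hA]; exact Finset.sum_congr rfl (fun v _ => hs₀app v)
  have hFmon : (∏ v : Fin (L - 1) × Fin N, X v ^ A v) = mon s₀ := by
    have h1 : (∏ v : Fin (L - 1) × Fin N, (X v : MvPolynomial _ ℂ) ^ A v)
        = ∏ v, X v ^ s₀ v := Finset.prod_congr rfl (fun v _ => by rw [hs₀app])
    rw [h1, mon, ← prod_X_pow_eq_monomial]
    exact (Finset.prod_subset (Finset.subset_univ s₀.support)
      (fun v _ hv => by rw [Finsupp.notMem_support_iff.mp hv, pow_zero])).symm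
  -- normalized operator identities
  have nQ : ∀ (a : Fin (L - 1)) (b : Fin N),
      Q ((a : ℕ) + 1) ((b : ℕ) + 1) = LinearMap.mulLeft ℂ (X (a, b)) := by
    intro a b
    rw [hQ ((a : ℕ) + 1) ((b : ℕ) + 1) ⟨by omega, by have := a.2; omega⟩
      ⟨by omega, by have := b.2; omega⟩]
    rfl
  have nP : ∀ (a : Fin (L - 1)) (b : Fin N),
      P ((a : ℕ) + 1) ((b : ℕ) + 1) = (pderiv (a, b)).toLinearMap := by
    intro a b
    rw [hP ((a : ℕ) + 1) ((b : ℕ) + 1) ⟨by omega, by have := a.2; omega⟩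
      ⟨by omega, by have := b.2; omega⟩]
    rfl
  obtain ⟨b₀, hb₀⟩ : ∃ b : Fin N, (b : ℕ) = i - 1 := ⟨⟨i - 1, by omega⟩, rfl⟩
  have hib : i = (b₀ : ℕ) + 1 := by omega
  have nNum : ∀ (a : Fin (L - 1)) (b : Fin N) (c : ℂ) (s : Fin (L - 1) × Fin N →₀ ℕ),
      (Q ((a : ℕ) + 1) ((b : ℕ) + 1) * P ((a : ℕ) + 1) ((b : ℕ) + 1)) (c • mon s)
        = (c * ((s (a, b) : ℕ) : ℂ)) • mon s := by
    intro a b c s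
    rw [Module.End.mul_apply, nQ, nP]
    exact numop (a, b) c s
  have nQ0 : ∀ b : Fin N, Q 0 ((b : ℕ) + 1)
      = θ ((b : ℕ) + 1) • (1 : Module.End ℂ (MvPolynomial (Fin (L - 1) × Fin N) ℂ))
        + ∑ a : Fin (L - 1), Q ((a : ℕ) + 1) ((b : ℕ) + 1) * P ((a : ℕ) + 1) ((b : ℕ) + 1) := by
    intro b
    rw [hQ0 ((b : ℕ) + 1) (by omega) (by have := b.2; omega), icc_sum_fin]
  have nP0 : ∀ a : Fin (L - 1), P ((a : ℕ) + 1) 0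
      = κ ((a : ℕ) + 1) • (1 : Module.End ℂ (MvPolynomial (Fin (L - 1) × Fin N) ℂ))
        + ∑ b : Fin N, Q ((a : ℕ) + 1) ((b : ℕ) + 1) * P ((a : ℕ) + 1) ((b : ℕ) + 1) := by
    intro a
    rw [hPm0 ((a : ℕ) + 1) (by omega) (by have := a.2; omega), icc_sum_fin]
  have nQ00 : Q 0 0 = (κ 0 - ∑ j ∈ Finset.Icc 1 N, θ j) •
        (1 : Module.End ℂ (MvPolynomial (Fin (L - 1) × Fin N) ℂ))
      - ∑ b : Fin N, ∑ a : Fin (L - 1),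
          Q ((a : ℕ) + 1) ((b : ℕ) + 1) * P ((a : ℕ) + 1) ((b : ℕ) + 1) := by
    rw [hQ00, icc_sum_fin N (fun j => ∑ m ∈ Finset.Icc 1 (L - 1), Q m j * P m j)]
    congr 1
    exact Finset.sum_congr rfl (fun b _ => icc_sum_fin _ _)
  have EQ0 : ∀ (b : Fin N) (c : ℂ) (s : Fin (L - 1) × Fin N →₀ ℕ),
      Q 0 ((b : ℕ) + 1) (c • mon s)
        = (c * (θ ((b : ℕ) + 1) + ∑ a : Fin (L - 1), ((s (a, b) : ℕ) : ℂ))) • mon s := by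
    intro b c s
    rw [nQ0 b, LinearMap.add_apply, LinearMap.smul_apply, Module.End.one_apply,
      LinearMap.sum_apply, Finset.sum_congr rfl (fun a _ => nNum a b c s),
      ← Finset.sum_smul, smul_smul, ← Finset.mul_sum, ← add_smul]
    congr 1
    ring
  have EP0 : ∀ (a : Fin (L - 1)) (c : ℂ) (s : Fin (L - 1) × Fin N →₀ ℕ),
      P ((a : ℕ) + 1) 0 (c • mon s)
        = (c * (κ ((a : ℕ) + 1) + ∑ b : Fin N, ((s (a, b) : ℕ) : ℂ))) • mon s := by
    intro a c s
    rw [nP0 a, LinearMap.add_apply, LinearMap.smul_apply, Module.End.one_apply,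
      LinearMap.sum_apply, Finset.sum_congr rfl (fun b _ => nNum a b c s),
      ← Finset.sum_smul, smul_smul, ← Finset.mul_sum, ← add_smul]
    congr 1
    ring
  have EQ00 : ∀ (c : ℂ) (s : Fin (L - 1) × Fin N →₀ ℕ),
      Q 0 0 (c • mon s)
        = (c * ((κ 0 - ∑ j ∈ Finset.Icc 1 N, θ j) - ((degf s : ℕ) : ℂ))) • mon s := by
    intro c s
    rw [nQ00, LinearMap.sub_apply, LinearMap.smul_apply, Module.End.one_apply,
      LinearMap.sum_apply,
      Finset.sum_congr rfl (fun b (_ : b ∈ Finset.univ) => by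
        rw [LinearMap.sum_apply,
          Finset.sum_congr rfl (fun a (_ : a ∈ Finset.univ) => nNum a b c s),
          ← Finset.sum_smul]),
      ← Finset.sum_smul, smul_smul, ← sub_smul]
    congr 1
    have hds : ((degf s : ℕ) : ℂ) = ∑ b : Fin N, ∑ a : Fin (L - 1), ((s (a, b) : ℕ) : ℂ) := by
      rw [degf, Fintype.sum_prod_type]
      push_cast
      exact Finset.sum_comm
    rw [hds]
    simp only [← Finset.mul_sum]
    ring
  -- Good transports
  have GF : Good (M : ℤ) (mon s₀) :=
    ⟨1, s₀, (one_smul _ _).symm, Or.inr (by rw [hdegf])⟩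
  have gQ : ∀ m j, 1 ≤ m → m ≤ L - 1 → 1 ≤ j → j ≤ N → ∀ (d : ℤ) p,
      Good d p → Good (d + 1) (Q m j p) := by
    intro m j h1 h2 h3 h4 d p hp
    rw [hQ m j ⟨h1, h2⟩ ⟨h3, h4⟩]
    exact good_X_mul _ hp
  have gP : ∀ m j, 1 ≤ m → m ≤ L - 1 → 1 ≤ j → j ≤ N → ∀ (d : ℤ) p,
      Good d p → Good (d - 1) (P m j p) := by
    intro m j h1 h2 h3 h4 d p hp
    rw [hP m j ⟨h1, h2⟩ ⟨h3, h4⟩]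
    exact good_pderiv _ hp
  have gP0 : ∀ j, 1 ≤ j → j ≤ N → ∀ (d : ℤ) p, Good d p → Good d (P 0 j p) := by
    intro j h3 h4 d p hp
    rw [hP0 j h3 h4]
    exact good_neg hp
  have gQm0 : ∀ m, 1 ≤ m → m ≤ L - 1 → ∀ (d : ℤ) p, Good d p → Good d (Q m 0 p) := by
    intro m h1 h2 d p hp
    rw [hQm0 m h1 h2]
    exact good_neg hp
  have gP00 : ∀ (d : ℤ) p, Good d p → Good d (P 0 0 p) := by
    intro d p hp
    rw [hP00]
    exact good_neg hp
  have gQ0 : ∀ j, 1 ≤ j → j ≤ N → ∀ (d : ℤ) p, Good d p → Good d (Q 0 j p) := by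
    intro j h3 h4 d p hp
    obtain ⟨c, s, rfl, hcs⟩ := hp
    obtain ⟨b, hb⟩ : ∃ b : Fin N, j = (b : ℕ) + 1 := ⟨⟨j - 1, by omega⟩, by simp; omega⟩
    rw [hb, EQ0]
    exact ⟨_, s, rfl, hcs.imp (fun h => by rw [h, zero_mul]) id⟩
  have gPm0 : ∀ m, 1 ≤ m → m ≤ L - 1 → ∀ (d : ℤ) p, Good d p → Good d (P m 0 p) := by
    intro m h1 h2 d p hp
    obtain ⟨c, s, rfl, hcs⟩ := hp
    obtain ⟨a, ha⟩ : ∃ a : Fin (L - 1), m = (a : ℕ) + 1 := ⟨⟨m - 1, by omega⟩, by simp; omega⟩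
    rw [ha, EP0]
    exact ⟨_, s, rfl, hcs.imp (fun h => by rw [h, zero_mul]) id⟩
  have gQ00 : ∀ (d : ℤ) p, Good d p → Good d (Q 0 0 p) := by
    intro d p hp
    obtain ⟨c, s, rfl, hcs⟩ := hp
    rw [EQ00]
    exact ⟨_, s, rfl, hcs.imp (fun h => by rw [h, zero_mul]) id⟩
  rw [hFmon]
  have hz1' : z i - 1 ≠ 0 := sub_ne_zero.mpr (hz1 i hi1 hi2)
  have hsm : (z i * (z i - 1)) • (H i (mon s₀)) = (z i - 1) • ((z i • H i) (mon s₀)) := by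
    rw [LinearMap.smul_apply, smul_smul, mul_comm]
  rw [hsm, hH i hi1 hi2]
  simp only [LinearMap.add_apply, LinearMap.smul_apply, Module.End.one_apply, smul_add]
  have hmid : (z i - 1) • (z i - 1)⁻¹ •
      (∑ m ∈ Finset.range L, ∑ n ∈ Finset.range L,
        Q m i * P m 0 * Q n 0 * P n i) (mon s₀)
      = (∑ m ∈ Finset.range L, ∑ n ∈ Finset.range L,
        Q m i * P m 0 * Q n 0 * P n i) (mon s₀) := by
    rw [smul_smul, mul_inv_cancel₀ hz1', one_smul]
  rw [hmid]
  have nQi : ∀ a : Fin (L - 1), Q ((a : ℕ) + 1) i = LinearMap.mulLeft ℂ (X (a, b₀)) :=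
    fun a => by rw [hib]; exact nQ a b₀
  have hcancel : ∑ m ∈ Finset.Icc 1 (L - 1), (Q m i * P m 0 * Q 0 0 * P 0 i) (mon s₀)
      = -∑ a : Fin (L - 1),
          ((κ 0 - ∑ j ∈ Finset.Icc 1 N, θ j - (M : ℂ)) *
            (κ ((a : ℕ) + 1) + ∑ b : Fin N, (A (a, b) : ℂ))) •
          (X (a, (⟨i - 1, by omega⟩ : Fin N)) * mon s₀) := by
    rw [icc_sum_fin (L - 1) (fun m => (Q m i * P m 0 * Q 0 0 * P 0 i) (mon s₀)),
      ← Finset.sum_neg_distrib]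
    refine Finset.sum_congr rfl (fun a _ => ?_)
    simp only [Module.End.mul_apply]
    rw [hP0 i hi1 hi2]
    simp only [LinearMap.neg_apply, Module.End.one_apply]
    rw [show -(mon s₀) = (-1 : ℂ) • (mon s₀) from by simp, EQ00, EP0, nQi a]
    simp only [LinearMap.mulLeft_apply]
    rw [mul_smul_comm, ← neg_smul]
    have hb : (a, b₀) = (a, (⟨i - 1, by omega⟩ : Fin N)) := by
      exact Prod.ext rfl (Fin.ext hb₀)
    rw [hb, hdegf]
    simp only [hs₀app]
    congr 1
    ring
  have hrL : Finset.range L = insert 0 (Finset.Icc 1 (L - 1)) := by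
    ext x; simp only [Finset.mem_range, Finset.mem_insert, Finset.mem_Icc]; omega
  have h0n : (0 : ℕ) ∉ Finset.Icc 1 (L - 1) := by simp
  have hre : (z i - 1) • (∑ n ∈ Finset.range L, e n • (Q n i * P n i)) (mon s₀) +
        (z i - 1) • (∑ j ∈ Finset.range (N + 1), ∑ n ∈ Finset.range L,
          ∑ m ∈ Finset.range n, Q m i * P m j * Q n j * P n i) (mon s₀) +
        (∑ m ∈ Finset.range L, ∑ n ∈ Finset.range L,
          Q m i * P m 0 * Q n 0 * P n i) (mon s₀) +
        (z i - 1) • (∑ j ∈ (Finset.Icc 1 N).erase i, (z j / (z i - z j)) •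
          ∑ m ∈ Finset.range L, ∑ n ∈ Finset.range L,
            Q m i * P n i * Q n j * P m j) (mon s₀) +
        (z i - 1) • (θ i * (e 0 + κ 0 - ∑ j ∈ Finset.Icc 1 N, θ j -
          ∑ j ∈ (Finset.Icc 1 N).erase i, θ j * z j / (z i - z j))) • mon s₀ +
        ∑ a : Fin (L - 1),
          ((κ 0 - ∑ j ∈ Finset.Icc 1 N, θ j - (M : ℂ)) *
            (κ ((a : ℕ) + 1) + ∑ b : Fin N, (A (a, b) : ℂ))) •
          (X (a, (⟨i - 1, by omega⟩ : Fin N)) * mon s₀)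
      = ((z i - 1) • (∑ n ∈ Finset.range L, e n • (Q n i * P n i)) (mon s₀) +
        (z i - 1) • (∑ j ∈ Finset.range (N + 1), ∑ n ∈ Finset.range L,
          ∑ m ∈ Finset.range n, Q m i * P m j * Q n j * P n i) (mon s₀) +
        (z i - 1) • (∑ j ∈ (Finset.Icc 1 N).erase i, (z j / (z i - z j)) •
          ∑ m ∈ Finset.range L, ∑ n ∈ Finset.range L,
            Q m i * P n i * Q n j * P m j) (mon s₀) +
        (z i - 1) • (θ i * (e 0 + κ 0 - ∑ j ∈ Finset.Icc 1 N, θ j -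
          ∑ j ∈ (Finset.Icc 1 N).erase i, θ j * z j / (z i - z j))) • mon s₀) +
        ((∑ m ∈ Finset.range L, ∑ n ∈ Finset.range L,
          Q m i * P m 0 * Q n 0 * P n i) (mon s₀) +
        ∑ a : Fin (L - 1),
          ((κ 0 - ∑ j ∈ Finset.Icc 1 N, θ j - (M : ℂ)) *
            (κ ((a : ℕ) + 1) + ∑ b : Fin N, (A (a, b) : ℂ))) •
          (X (a, (⟨i - 1, by omega⟩ : Fin N)) * mon s₀)) := by abel
  rw [hre]
  have hS3C : (∑ m ∈ Finset.range L, ∑ n ∈ Finset.range L,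
          Q m i * P m 0 * Q n 0 * P n i) (mon s₀) +
        ∑ a : Fin (L - 1),
          ((κ 0 - ∑ j ∈ Finset.Icc 1 N, θ j - (M : ℂ)) *
            (κ ((a : ℕ) + 1) + ∑ b : Fin N, (A (a, b) : ℂ))) •
          (X (a, (⟨i - 1, by omega⟩ : Fin N)) * mon s₀)
      = ((Q 0 i * P 0 0 * Q 0 0 * P 0 i) (mon s₀) +
          ∑ n ∈ Finset.Icc 1 (L - 1), (Q 0 i * P 0 0 * Q n 0 * P n i) (mon s₀)) +
        ∑ m ∈ Finset.Icc 1 (L - 1), ∑ n ∈ Finset.Icc 1 (L - 1),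
          (Q m i * P m 0 * Q n 0 * P n i) (mon s₀) := by
    simp only [LinearMap.sum_apply, LinearMap.add_apply, hrL, Finset.sum_insert h0n,
      Finset.sum_add_distrib]
    rw [hcancel]
    abel
  refine le_trans (MvPolynomial.totalDegree_add _ _) (max_le ?_ ?_)
  · refine le_trans (MvPolynomial.totalDegree_add _ _) (max_le ?_ ?_)
    · refine le_trans (MvPolynomial.totalDegree_add _ _) (max_le ?_ ?_)
      · refine le_trans (MvPolynomial.totalDegree_add _ _) (max_le ?_ ?_)
        · -- chunk 1
          refine le_trans (MvPolynomial.totalDegree_smul_le _ _) ?_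
          rw [LinearMap.sum_apply]
          refine MvPolynomial.totalDegree_finsetSum_le (fun n hn => ?_)
          rw [LinearMap.smul_apply]
          refine le_trans (MvPolynomial.totalDegree_smul_le _ _) ?_
          rw [Module.End.mul_apply]
          have hn' : n ≤ L - 1 := by have := Finset.mem_range.mp hn; omega
          rcases Nat.eq_zero_or_pos n with h0 | h1
          · subst h0
            exact good_totalDegree (gQ0 i hi1 hi2 _ _ (gP0 i hi1 hi2 _ _ GF))
          · exact good_totalDegree (good_mono (by omega)
              (gQ n i h1 hn' hi1 hi2 _ _ (gP n i h1 hn' hi1 hi2 _ _ GF)))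
        · -- chunk 2
          refine le_trans (MvPolynomial.totalDegree_smul_le _ _) ?_
          rw [LinearMap.sum_apply]
          refine MvPolynomial.totalDegree_finsetSum_le (fun j hj => ?_)
          rw [LinearMap.sum_apply]
          refine MvPolynomial.totalDegree_finsetSum_le (fun n hn => ?_)
          rw [LinearMap.sum_apply]
          refine MvPolynomial.totalDegree_finsetSum_le (fun m hm => ?_)
          simp only [Module.End.mul_apply]
          have hmn : m < n := Finset.mem_range.mp hm
          have hn' : n ≤ L - 1 := by have := Finset.mem_range.mp hn; omega
          have hn1 : 1 ≤ n := by omega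
          have hm' : m ≤ L - 1 := by omega
          have hj' : j ≤ N := by have := Finset.mem_range.mp hj; omega
          have s1 := gP n i hn1 hn' hi1 hi2 _ _ GF
          rcases Nat.eq_zero_or_pos j with hj0 | hj1
          · subst hj0
            have s2 := gQm0 n hn1 hn' _ _ s1
            rcases Nat.eq_zero_or_pos m with hm0 | hm1
            · subst hm0
              exact good_totalDegree (good_mono (by omega)
                (gQ0 i hi1 hi2 _ _ (gP00 _ _ s2)))
            · exact good_totalDegree (good_mono (by omega)
                (gQ m i hm1 hm' hi1 hi2 _ _ (gPm0 m hm1 hm' _ _ s2)))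
          · have s2 := gQ n j hn1 hn' hj1 hj' _ _ s1
            rcases Nat.eq_zero_or_pos m with hm0 | hm1
            · subst hm0
              exact good_totalDegree (good_mono (by omega)
                (gQ0 i hi1 hi2 _ _ (gP0 j hj1 hj' _ _ s2)))
            · exact good_totalDegree (good_mono (by omega)
                (gQ m i hm1 hm' hi1 hi2 _ _ (gP m j hm1 hm' hj1 hj' _ _ s2)))
      · -- chunk 4
        refine le_trans (MvPolynomial.totalDegree_smul_le _ _) ?_
        rw [LinearMap.sum_apply]
        refine MvPolynomial.totalDegree_finsetSum_le (fun j hj => ?_)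
        rw [LinearMap.smul_apply]
        refine le_trans (MvPolynomial.totalDegree_smul_le _ _) ?_
        rw [LinearMap.sum_apply]
        refine MvPolynomial.totalDegree_finsetSum_le (fun m hm => ?_)
        rw [LinearMap.sum_apply]
        refine MvPolynomial.totalDegree_finsetSum_le (fun n hn => ?_)
        simp only [Module.End.mul_apply]
        have hj1 : 1 ≤ j := (Finset.mem_Icc.mp (Finset.mem_of_mem_erase hj)).1
        have hj2 : j ≤ N := (Finset.mem_Icc.mp (Finset.mem_of_mem_erase hj)).2
        have hm' : m ≤ L - 1 := by have := Finset.mem_range.mp hm; omega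
        have hn' : n ≤ L - 1 := by have := Finset.mem_range.mp hn; omega
        rcases Nat.eq_zero_or_pos m with hm0 | hm1
        · subst hm0
          have s1 := gP0 j hj1 hj2 _ _ GF
          rcases Nat.eq_zero_or_pos n with hn0 | hn1
          · subst hn0
            exact good_totalDegree
              (gQ0 i hi1 hi2 _ _ (gP0 i hi1 hi2 _ _ (gQ0 j hj1 hj2 _ _ s1)))
          · exact good_totalDegree (good_mono (by omega) (gQ0 i hi1 hi2 _ _
              (gP n i hn1 hn' hi1 hi2 _ _ (gQ n j hn1 hn' hj1 hj2 _ _ s1))))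
        · have s1 := gP m j hm1 hm' hj1 hj2 _ _ GF
          rcases Nat.eq_zero_or_pos n with hn0 | hn1
          · subst hn0
            exact good_totalDegree (good_mono (by omega) (gQ m i hm1 hm' hi1 hi2 _ _
              (gP0 i hi1 hi2 _ _ (gQ0 j hj1 hj2 _ _ s1))))
          · exact good_totalDegree (good_mono (by omega) (gQ m i hm1 hm' hi1 hi2 _ _
              (gP n i hn1 hn' hi1 hi2 _ _ (gQ n j hn1 hn' hj1 hj2 _ _ s1))))
    · -- chunk 5
      refine le_trans (MvPolynomial.totalDegree_smul_le _ _) ?_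
      refine le_trans (MvPolynomial.totalDegree_smul_le _ _) ?_
      exact good_totalDegree GF
  · -- S3 + C
    rw [hS3C]
    refine le_trans (MvPolynomial.totalDegree_add _ _) (max_le
      (le_trans (MvPolynomial.totalDegree_add _ _) (max_le ?_ ?_)) ?_)
    · simp only [Module.End.mul_apply]
      exact good_totalDegree
        (gQ0 i hi1 hi2 _ _ (gP00 _ _ (gQ00 _ _ (gP0 i hi1 hi2 _ _ GF))))
    · refine MvPolynomial.totalDegree_finsetSum_le (fun n hn => ?_)
      simp only [Module.End.mul_apply]
      have hn1 := (Finset.mem_Icc.mp hn).1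
      have hn' := (Finset.mem_Icc.mp hn).2
      exact good_totalDegree (good_mono (by omega) (gQ0 i hi1 hi2 _ _
        (gP00 _ _ (gQm0 n hn1 hn' _ _ (gP n i hn1 hn' hi1 hi2 _ _ GF)))))
    · refine MvPolynomial.totalDegree_finsetSum_le (fun m hm => ?_)
      refine MvPolynomial.totalDegree_finsetSum_le (fun n hn => ?_)
      simp only [Module.End.mul_apply]
      have hm1 := (Finset.mem_Icc.mp hm).1
      have hm' := (Finset.mem_Icc.mp hm).2
      have hn1 := (Finset.mem_Icc.mp hn).1
      have hn' := (Finset.mem_Icc.mp hn).2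
      exact good_totalDegree (good_mono (by omega) (gQ m i hm1 hm' hi1 hi2 _ _
        (gPm0 m hm1 hm' _ _ (gQm0 n hn1 hn' _ _ (gP n i hn1 hn' hi1 hi2 _ _ GF)))))
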